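/- For a fixed smooth compactly supported function f on [0,∞), the map λ ↦ ∫₀^∞ ∫₀^∞ (i/(2√λ)) (e^{i√λ(x+s)} + e^{i√λ|x−s|}) f(s) conj(f(x)) ds dx, initially defined for λ in the open upper half-plane, extends analytically across any interval (a,b) ⊂ (0,∞) of the real axis. -/

import Mathlib

open MeasureTheory Complex Set

noncomputable def csqrt (z : ℂ) : ℂ := z ^ (1 / 2 : ℂ)

noncomputable def Sd (lam : ℂ) : ℂ := (1 / 2 : ℂ) * lam ^ ((1 / 2 : ℂ) - 1)

noncomputable def Hfun (lam : ℂ) (w : ℝ) : ℂ :=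
  Complex.I / 2 * (csqrt lam)⁻¹ * Complex.exp (Complex.I * csqrt lam * (w : ℂ))

noncomputable def Dfun (lam : ℂ) (w : ℝ) : ℂ :=
  Complex.I / 2 * (-Sd lam / csqrt lam ^ 2) * Complex.exp (Complex.I * csqrt lam * (w : ℂ))
    + Complex.I / 2 * (csqrt lam)⁻¹ *
      (Complex.exp (Complex.I * csqrt lam * (w : ℂ)) * (Complex.I * Sd lam * (w : ℂ)))

lemma csqrt_ne_zero {lam : ℂ} (h : lam ∈ Complex.slitPlane) : csqrt lam ≠ 0 := by
  have hne : lam ≠ 0 := Complex.slitPlane_ne_zero h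
  simp [csqrt, Complex.cpow_eq_zero_iff, hne]

lemma hasDerivAt_csqrt {lam : ℂ} (h : lam ∈ Complex.slitPlane) :
    HasDerivAt csqrt (Sd lam) lam := by
  have h1 := (hasDerivAt_id lam).cpow_const (c := (1/2 : ℂ)) (by simpa using h)
  have h2 : HasDerivAt (fun z : ℂ => z ^ (1/2 : ℂ)) (Sd lam) lam := by
    simpa [Sd, mul_one] using h1
  exact h2

lemma hasDerivAt_Hfun {lam : ℂ} (h : lam ∈ Complex.slitPlane) (w : ℝ) :
    HasDerivAt (fun z => Hfun z w) (Dfun lam w) lam := by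
  have hS := hasDerivAt_csqrt h
  have hS0 := csqrt_ne_zero h
  have h3 : HasDerivAt (fun z => Complex.I / 2 * (csqrt z)⁻¹)
      (Complex.I / 2 * (-Sd lam / csqrt lam ^ 2)) lam := (hS.inv hS0).const_mul _
  have h4 : HasDerivAt (fun z => Complex.I * csqrt z * (w : ℂ))
      (Complex.I * Sd lam * (w : ℂ)) lam := (hS.const_mul _).mul_const _
  have h5 := h4.cexp
  exact h3.mul h5

lemma continuousOn_Dfun :
    ContinuousOn (fun q : ℂ × ℝ => Dfun q.1 q.2) (Complex.slitPlane ×ˢ (univ : Set ℝ)) := by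
  have hfst : ∀ q ∈ Complex.slitPlane ×ˢ (univ : Set ℝ), q.1 ∈ Complex.slitPlane :=
    fun q hq => hq.1
  have hS : ContinuousOn (fun q : ℂ × ℝ => csqrt q.1) (Complex.slitPlane ×ˢ (univ : Set ℝ)) :=
    fun q hq => ((continuousAt_cpow_const (hfst q hq)).comp
      (continuousAt_fst)).continuousWithinAt
  have hSd : ContinuousOn (fun q : ℂ × ℝ => Sd q.1) (Complex.slitPlane ×ˢ (univ : Set ℝ)) := by
    have : ContinuousOn (fun q : ℂ × ℝ => q.1 ^ ((1/2 : ℂ) - 1))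
        (Complex.slitPlane ×ˢ (univ : Set ℝ)) :=
      fun q hq => ((continuousAt_cpow_const (hfst q hq)).comp
        (continuousAt_fst)).continuousWithinAt
    exact continuousOn_const.mul this
  have hne : ∀ q ∈ Complex.slitPlane ×ˢ (univ : Set ℝ), csqrt q.1 ≠ 0 :=
    fun q hq => csqrt_ne_zero (hfst q hq)
  have hw : ContinuousOn (fun q : ℂ × ℝ => ((q.2 : ℝ) : ℂ))
      (Complex.slitPlane ×ˢ (univ : Set ℝ)) :=
    (Complex.continuous_ofReal.comp continuous_snd).continuousOn
  have hE : ContinuousOn (fun q : ℂ × ℝ => Complex.exp (Complex.I * csqrt q.1 * (q.2 : ℂ)))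
      (Complex.slitPlane ×ˢ (univ : Set ℝ)) :=
    Complex.continuous_exp.comp_continuousOn ((continuousOn_const.mul hS).mul hw)
  exact ((continuousOn_const.mul ((hSd.neg).div (hS.pow 2) (fun q hq => pow_ne_zero 2 (hne q hq)))).mul hE).add
    ((continuousOn_const.mul (hS.inv₀ hne)).mul
      (hE.mul ((continuousOn_const.mul hSd).mul hw)))

noncomputable def Kfun (f : ℝ → ℂ) (lam : ℂ) (p : ℝ × ℝ) : ℂ :=
  (Hfun lam (p.1 + p.2) + Hfun lam |p.1 - p.2|) * (f p.2 * (starRingEnd ℂ) (f p.1))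

noncomputable def Kd (f : ℝ → ℂ) (lam : ℂ) (p : ℝ × ℝ) : ℂ :=
  (Dfun lam (p.1 + p.2) + Dfun lam |p.1 - p.2|) * (f p.2 * (starRingEnd ℂ) (f p.1))

lemma integrable_aux {f : ℝ → ℂ} (hsupp : HasCompactSupport f) {E : Type*}
    [NormedAddCommGroup E] {g : ℝ × ℝ → E} (hg : Continuous g)
    (hz : ∀ p : ℝ × ℝ, (f p.2 = 0 ∨ f p.1 = 0) → g p = 0) :
    Integrable g ((volume.restrict (Ioi (0:ℝ))).prod (volume.restrict (Ioi (0:ℝ)))) := by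
  have hK : IsCompact (tsupport f ×ˢ tsupport f) := hsupp.prod hsupp
  have hgs : HasCompactSupport g := by
    refine HasCompactSupport.intro hK ?_
    intro p hp
    rw [Set.mem_prod] at hp
    push_neg at hp
    by_cases h1 : p.1 ∈ tsupport f
    · exact hz p (Or.inl (image_eq_zero_of_notMem_tsupport (hp h1)))
    · exact hz p (Or.inr (image_eq_zero_of_notMem_tsupport h1))
  have hint : Integrable g (volume : Measure (ℝ × ℝ)) :=
    hg.integrable_of_hasCompactSupport hgs
  rw [Measure.prod_restrict, ← Measure.volume_eq_prod]
  exact hint.restrict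

lemma continuous_Hfun_w (lam : ℂ) : Continuous (fun w : ℝ => Hfun lam w) := by
  unfold Hfun; fun_prop

lemma continuous_Kfun (f : ℝ → ℂ) (hf : Continuous f) (lam : ℂ) :
    Continuous (Kfun f lam) := by
  have h1 : Continuous (fun p : ℝ × ℝ => p.1 + p.2) := by fun_prop
  have h2 : Continuous (fun p : ℝ × ℝ => |p.1 - p.2|) := by fun_prop
  exact (((continuous_Hfun_w lam).comp h1).add ((continuous_Hfun_w lam).comp h2)).mul
    ((hf.comp continuous_snd).mul (Complex.continuous_conj.comp (hf.comp continuous_fst)))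

lemma continuous_Dfun_w {lam : ℂ} (h : lam ∈ Complex.slitPlane) :
    Continuous (fun w : ℝ => Dfun lam w) := by
  have := continuousOn_Dfun.comp_continuous
    (continuous_const.prodMk continuous_id : Continuous fun w : ℝ => (lam, w))
    (fun w => Set.mk_mem_prod h (mem_univ w))
  exact this

lemma continuous_Kd (f : ℝ → ℂ) (hf : Continuous f) {lam : ℂ} (h : lam ∈ Complex.slitPlane) :
    Continuous (Kd f lam) := by
  have h1 : Continuous (fun p : ℝ × ℝ => p.1 + p.2) := by fun_prop
  have h2 : Continuous (fun p : ℝ × ℝ => |p.1 - p.2|) := by fun_prop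
  exact (((continuous_Dfun_w h).comp h1).add ((continuous_Dfun_w h).comp h2)).mul
    ((hf.comp continuous_snd).mul (Complex.continuous_conj.comp (hf.comp continuous_fst)))


set_option maxHeartbeats 1000000 in
lemma diff_aux (f : ℝ → ℂ) (hfc : Continuous f) (hsupp : HasCompactSupport f) :
    DifferentiableOn ℂ
      (fun lam => ∫ p, Kfun f lam p
        ∂((volume.restrict (Ioi (0:ℝ))).prod (volume.restrict (Ioi (0:ℝ)))))
      Complex.slitPlane := by
  set μ : Measure (ℝ × ℝ) :=
    (volume.restrict (Ioi (0:ℝ))).prod (volume.restrict (Ioi (0:ℝ))) with hμ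
  obtain ⟨r, hr⟩ := hsupp.isBounded.subset_closedBall 0
  set R : ℝ := max r 1 with hRdef
  have hR0 : (0:ℝ) < R := lt_of_lt_of_le one_pos (le_max_right r 1)
  have hRsub : tsupport f ⊆ Icc (-R) R := by
    refine hr.trans ?_
    rw [Real.closedBall_eq_Icc]
    simpa using Icc_subset_Icc (neg_le_neg (le_max_left r 1)) (le_max_left r 1)
  intro lam0 hlam0
  obtain ⟨ε, hε, hball⟩ :=
    Metric.nhds_basis_closedBall.mem_iff.1 (Complex.isOpen_slitPlane.mem_nhds hlam0)
  have hT : IsCompact (Metric.closedBall lam0 ε ×ˢ Icc (0:ℝ) (2*R)) :=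
    (isCompact_closedBall _ _).prod isCompact_Icc
  obtain ⟨C, hC⟩ := hT.exists_bound_of_continuousOn
    (continuousOn_Dfun.mono (prod_mono hball (subset_univ _)))
  have key := hasDerivAt_integral_of_dominated_loc_of_deriv_le (μ := μ)
    (F := fun lam p => Kfun f lam p) (F' := fun lam p => Kd f lam p)
    (x₀ := lam0) (bound := fun p => 2 * C * (‖f p.2‖ * ‖f p.1‖)) (Metric.ball_mem_nhds lam0 hε)
    ?_ ?_ ?_ ?_ ?_ ?_
  · exact key.2.differentiableAt.differentiableWithinAt
  · exact Filter.Eventually.of_forall fun lam =>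
      (continuous_Kfun f hfc lam).aestronglyMeasurable
  · exact integrable_aux hsupp (continuous_Kfun f hfc lam0)
      (by rintro p (h | h) <;> simp [Kfun, h])
  · exact (continuous_Kd f hfc hlam0).aestronglyMeasurable
  · have hae : ∀ᵐ p ∂μ, p ∈ Ioi (0:ℝ) ×ˢ Ioi (0:ℝ) := by
      rw [hμ, Measure.prod_restrict, ← Measure.volume_eq_prod]
      exact ae_restrict_mem (measurableSet_Ioi.prod measurableSet_Ioi)
    filter_upwards [hae] with p hp lam hlam
    by_cases h1 : f p.1 = 0
    · simp [Kd, h1]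
    by_cases h2 : f p.2 = 0
    · simp [Kd, h2]
    have hp1 : p.1 ∈ Icc (-R) R := hRsub (subset_tsupport f h1)
    have hp2 : p.2 ∈ Icc (-R) R := hRsub (subset_tsupport f h2)
    have hx0 : (0:ℝ) < p.1 := hp.1
    have hs0 : (0:ℝ) < p.2 := hp.2
    have hw1 : p.1 + p.2 ∈ Icc (0:ℝ) (2*R) :=
      ⟨by positivity, by linarith [hp1.2, hp2.2]⟩
    have hw2 : |p.1 - p.2| ∈ Icc (0:ℝ) (2*R) := by
      refine ⟨abs_nonneg _, ?_⟩
      have h3 := hp1.1; have h4 := hp1.2; have h5 := hp2.1; have h6 := hp2.2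
      exact abs_le.mpr ⟨by linarith, by linarith⟩
    have hlam' : lam ∈ Metric.closedBall lam0 ε := Metric.ball_subset_closedBall hlam
    have hD1 : ‖Dfun lam (p.1 + p.2)‖ ≤ C := hC (lam, p.1 + p.2) (Set.mk_mem_prod hlam' hw1)
    have hD2 : ‖Dfun lam (|p.1 - p.2|)‖ ≤ C := hC (lam, |p.1 - p.2|) (Set.mk_mem_prod hlam' hw2)
    calc ‖Kd f lam p‖
        = ‖Dfun lam (p.1 + p.2) + Dfun lam (|p.1 - p.2|)‖ *
            (‖f p.2‖ * ‖f p.1‖) := by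
          simp [Kd, norm_mul]
      _ ≤ (C + C) * (‖f p.2‖ * ‖f p.1‖) := by
          refine mul_le_mul_of_nonneg_right ((norm_add_le _ _).trans (add_le_add hD1 hD2))
            (by positivity)
      _ = 2 * C * (‖f p.2‖ * ‖f p.1‖) := by ring
  · exact integrable_aux hsupp
      ((continuous_const.mul ((hfc.norm.comp continuous_snd).mul
        (hfc.norm.comp continuous_fst))))
      (by rintro p (h | h) <;> simp [h])
  · refine Filter.Eventually.of_forall fun p => fun lam hlam => ?_
    have hmem : lam ∈ Complex.slitPlane := hball (Metric.ball_subset_closedBall hlam)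
    exact ((hasDerivAt_Hfun hmem _).add (hasDerivAt_Hfun hmem _)).mul_const _

set_option maxHeartbeats 1000000 in
lemma eq_aux (f : ℝ → ℂ) (hfc : Continuous f) (hsupp : HasCompactSupport f) (lam : ℂ) :
    (∫ p, Kfun f lam p
        ∂((volume.restrict (Ioi (0:ℝ))).prod (volume.restrict (Ioi (0:ℝ))))) =
      ∫ x in Ioi (0 : ℝ), (∫ s in Ioi (0 : ℝ),
        (Complex.I / (2 * csqrt lam)) *
          (Complex.exp (Complex.I * csqrt lam * ((x : ℂ) + (s : ℂ)))
            + Complex.exp (Complex.I * csqrt lam * ((|x - s| : ℝ) : ℂ))) * f s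
          * (starRingEnd ℂ) (f x)) := by
  have hint : Integrable (Kfun f lam)
      ((volume.restrict (Ioi (0:ℝ))).prod (volume.restrict (Ioi (0:ℝ)))) :=
    integrable_aux hsupp (continuous_Kfun f hfc lam)
      (by rintro p (h | h) <;> simp [Kfun, h])
  rw [integral_prod _ hint]
  have hpt : ∀ x s : ℝ, Kfun f lam (x, s) =
      (Complex.I / (2 * csqrt lam)) *
        (Complex.exp (Complex.I * csqrt lam * ((x : ℂ) + (s : ℂ)))
          + Complex.exp (Complex.I * csqrt lam * ((|x - s| : ℝ) : ℂ))) * f s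
        * (starRingEnd ℂ) (f x) := by
    intro x s
    simp only [Kfun, Hfun]
    push_cast
    ring
  simp only [hpt]

theorem resolvent_quadratic_form_continuation
    (f : ℝ → ℂ) (hf : ContDiff ℝ (⊤ : ℕ∞) f) (hsupp : HasCompactSupport f)
    (a b : ℝ) (ha : 0 < a) (hab : a < b) :
    ∃ V : Set ℂ, IsOpen V ∧
      ({z : ℂ | 0 < z.im} ∪ ((fun x : ℝ => (x : ℂ)) '' Ioo a b)) ⊆ V ∧
      ∃ F : ℂ → ℂ, DifferentiableOn ℂ F V ∧
        ∀ lam : ℂ, 0 < lam.im →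
          F lam = ∫ x in Ioi (0 : ℝ), (∫ s in Ioi (0 : ℝ),
            (Complex.I / (2 * csqrt lam)) *
              (Complex.exp (Complex.I * csqrt lam * ((x : ℂ) + (s : ℂ)))
                + Complex.exp (Complex.I * csqrt lam * ((|x - s| : ℝ) : ℂ))) * f s
              * (starRingEnd ℂ) (f x)) := by
  refine ⟨Complex.slitPlane, Complex.isOpen_slitPlane, ?_,
    fun lam => ∫ p, Kfun f lam p
      ∂((volume.restrict (Ioi (0:ℝ))).prod (volume.restrict (Ioi (0:ℝ)))),
    diff_aux f hf.continuous hsupp, fun lam _ => eq_aux f hf.continuous hsupp lam⟩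
  rintro z (hz | ⟨x, hx, rfl⟩)
  · exact Or.inr (ne_of_gt hz)
  · exact Or.inl (by simpa using lt_trans ha hx.1)
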